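/- arXiv:2402.15432 — 4 statements merged into one kernel-verified Lean document; each statement's English description precedes it below -/
import Mathlib

section
/- Let z₁, z₂ ∈ [k]^n be cluster labellings and suppose there exists a permutation τ* of [k] such that Ham(z₁, τ*∘z₂) < (1/2)·min_{a∈[k]} |{i : (z₁)ᵢ = a}|. Then τ* is the unique minimiser over permutations τ of [k] of the map τ ↦ Ham(z₁, τ∘z₂). -/
/-- If some permutation τ* brings z₂ within Hamming distance less than half the smallest
cluster size of z₁, then τ* is the unique minimiser of τ ↦ Ham(z₁, τ∘z₂). -/
theorem stmt3 {n k : ℕ} (z₁ z₂ : Fin n → Fin k) (τstar : Equiv.Perm (Fin k))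
    (h : ∀ a : Fin k,
      2 * (Finset.univ.filter fun i => z₁ i ≠ τstar (z₂ i)).card
        < (Finset.univ.filter fun i => z₁ i = a).card) :
    ∀ τ : Equiv.Perm (Fin k), τ ≠ τstar →
      (Finset.univ.filter fun i => z₁ i ≠ τstar (z₂ i)).card
        < (Finset.univ.filter fun i => z₁ i ≠ τ (z₂ i)).card := by
  intro τ hτ
  obtain ⟨b, hb⟩ : ∃ b, τ b ≠ τstar b := by
    by_contra hc
    push_neg at hc
    exact hτ (Equiv.ext hc)
  set a := τstar b with ha
  set M := Finset.univ.filter fun i => z₁ i ≠ τstar (z₂ i) with hM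
  set S := Finset.univ.filter fun i => z₁ i = a with hS
  have hsub : S \ M ⊆ Finset.univ.filter fun i => z₁ i ≠ τ (z₂ i) := by
    intro i hi
    simp only [hM, hS, Finset.mem_sdiff, Finset.mem_filter, Finset.mem_univ, true_and,
      not_not] at hi ⊢
    obtain ⟨h1, h2⟩ := hi
    have hz : z₂ i = b := τstar.injective (by rw [← h2, h1])
    rw [hz, h1]
    exact fun hh => hb hh.symm
  have hcard := Finset.card_le_card hsub
  have hge : S.card - M.card ≤ (S \ M).card := Finset.le_card_sdiff M S
  have hha : 2 * M.card < S.card := h a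
  omega
end

section
/- Let f_a and f_b be d-dimensional product Laplace densities, f_c(x) = ∏_{ℓ=1}^d (1/(2σ_ℓ)) exp(−|x_ℓ − μ_{cℓ}|/σ_ℓ) for c ∈ {a,b}, with common scales σ_ℓ > 0. Then the Chernoff information satisfies Chernoff(f_a, f_b) = (1/2) ∑_{ℓ=1}^d ( |μ_{aℓ} − μ_{bℓ}|/σ_ℓ − 2 log(1 + |μ_{aℓ} − μ_{bℓ}|/(2σ_ℓ)) ), with the supremum over t ∈ (0,1) in the definition of Chernoff information attained at t = 1/2. -/
/-!
The integrand `f_a^t f_b^{1-t}` is a product over coordinates, so the `t`-Rényi integral is the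
product of one-dimensional integrals `(2σ)⁻¹ ∫ exp (-(t |y - a| + (1 - t) |y - b|) / σ) dy`.
Each of them is invariant under `t ↦ 1 - t` (reflect `y ↦ a + b - y`), and by convexity of `exp`
its integrand at `t = 1/2` is at most the mean of the integrands at `t` and `1 - t`; hence every
factor, and so the Rényi integral, is smallest at `t = 1/2`. There the one-dimensional integral is
elementary: with `Δ = |a - b|` it equals `(1 + Δ / (2σ)) exp (-Δ / (2σ))`.
-/

open MeasureTheory Real Set

lemma mul_exp_rpow_mul_mul_exp_rpow {c : ℝ} (hc : 0 ≤ c) (u v t : ℝ) :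
    (c * exp u) ^ t * (c * exp v) ^ (1 - t) = c * exp (t * u + (1 - t) * v) := by
  rw [mul_rpow hc (exp_pos u).le, mul_rpow hc (exp_pos v).le, ← exp_mul, ← exp_mul,
    mul_mul_mul_comm, ← rpow_add' hc (by simp), add_sub_cancel, rpow_one, ← exp_add,
    mul_comm u, mul_comm v]

lemma integral_prod_rpow_mul_prod_rpow {ι : Type*} [Fintype ι] (f g : ι → ℝ → ℝ)
    (hf : ∀ i y, 0 ≤ f i y) (hg : ∀ i y, 0 ≤ g i y) (t : ℝ) :
    ∫ x : ι → ℝ, (∏ i, f i (x i)) ^ t * (∏ i, g i (x i)) ^ (1 - t)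
      = ∏ i, ∫ y, f i y ^ t * g i y ^ (1 - t) := by
  simp_rw [← finsetProd_rpow _ _ (fun i _ => hf i _), ← finsetProd_rpow _ _ (fun i _ => hg i _),
    ← Finset.prod_mul_distrib]
  exact integral_fintype_prod_volume_eq_prod (fun i y => f i y ^ t * g i y ^ (1 - t))

lemma integrable_exp_neg_abs_div {c : ℝ} (hc : 0 < c) :
    Integrable fun y : ℝ => exp (-|y| / c) := by
  have hl : IntegrableOn (fun y : ℝ => exp (-|y| / c)) (Iic 0) :=
    (integrableOn_exp_mul_Iic (inv_pos.2 hc) 0).congr_fun (fun y hy => by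
      dsimp only; rw [abs_of_nonpos hy]; congr 1; ring) measurableSet_Iic
  have hr : IntegrableOn (fun y : ℝ => exp (-|y| / c)) (Ioi 0) :=
    (integrableOn_exp_mul_Ioi (neg_lt_zero.2 (inv_pos.2 hc)) 0).congr_fun (fun y hy => by
      dsimp only; rw [abs_of_pos hy]; congr 1; ring) measurableSet_Ioi
  simpa using hl.union hr

lemma integral_exp_neg_abs_sub_add_abs_sub_of_le {c a b : ℝ} (hc : 0 < c) (hab : a ≤ b) :
    ∫ y, exp (-(|y - a| + |y - b|) / c) = (b - a + c) * exp (-(b - a) / c) := by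
  have hint : Integrable fun y => exp (-(|y - a| + |y - b|) / c) :=
    ((integrable_exp_neg_abs_div hc).comp_sub_right a).mono' (by fun_prop)
      (ae_of_all _ fun y => by
        rw [norm_of_nonneg (exp_pos _).le, exp_le_exp]
        gcongr
        exact le_add_of_nonneg_right (abs_nonneg _))
  have hleft : ∫ y in Iic a, exp (-(|y - a| + |y - b|) / c) = c / 2 * exp (-(b - a) / c) := by
    rw [setIntegral_congr_fun measurableSet_Iic
      (g := fun y => exp (2 / c * y) * exp (-(a + b) / c)) fun y hy => ?_,
      integral_mul_const, integral_exp_mul_Iic (by positivity), div_mul_eq_mul_div, ← exp_add,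
      show 2 / c * a + -(a + b) / c = -(b - a) / c by ring]
    · field_simp
    · rw [mem_Iic] at hy
      dsimp only
      rw [← exp_add, abs_of_nonpos (by linarith), abs_of_nonpos (by linarith)]
      ring_nf
  have hmid : ∫ y in Ioc a b, exp (-(|y - a| + |y - b|) / c) = (b - a) * exp (-(b - a) / c) := by
    rw [setIntegral_congr_fun measurableSet_Ioc (g := fun _ => exp (-(b - a) / c))
      fun y hy => ?_, setIntegral_const, smul_eq_mul, measureReal_def, volume_Ioc,
      ENNReal.toReal_ofReal (by linarith)]
    rw [abs_of_pos (by linarith [hy.1]), abs_of_nonpos (by linarith [hy.2])]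
    ring_nf
  have hright : ∫ y in Ioi b, exp (-(|y - a| + |y - b|) / c) = c / 2 * exp (-(b - a) / c) := by
    rw [setIntegral_congr_fun measurableSet_Ioi
      (g := fun y => exp (-(2 / c) * y) * exp ((a + b) / c)) fun y hy => ?_,
      integral_mul_const, integral_exp_mul_Ioi (neg_neg_of_pos (by positivity)),
      neg_div_neg_eq, div_mul_eq_mul_div, ← exp_add,
      show -(2 / c) * b + (a + b) / c = -(b - a) / c by ring]
    · field_simp
    · rw [mem_Ioi] at hy
      dsimp only
      rw [← exp_add, abs_of_pos (by linarith), abs_of_pos (by linarith)]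
      ring_nf
  rw [← integral_add_compl measurableSet_Iic hint, compl_Iic, ← Ioc_union_Ioi_eq_Ioi hab,
    setIntegral_union (Ioc_disjoint_Ioi le_rfl) measurableSet_Ioi hint.integrableOn
      hint.integrableOn, hleft, hmid, hright]
  ring

lemma integral_exp_neg_abs_sub_add_abs_sub {c : ℝ} (hc : 0 < c) (a b : ℝ) :
    ∫ y, exp (-(|y - a| + |y - b|) / c) = (|a - b| + c) * exp (-|a - b| / c) := by
  rcases le_total a b with hab | hba
  · rw [abs_sub_comm, abs_of_nonneg (sub_nonneg.2 hab)]
    exact integral_exp_neg_abs_sub_add_abs_sub_of_le hc hab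
  · simp_rw [add_comm |_ - a|, abs_of_nonneg (sub_nonneg.2 hba)]
    exact integral_exp_neg_abs_sub_add_abs_sub_of_le hc hba

noncomputable def laplaceGeomMix (a b σ t y : ℝ) : ℝ :=
  exp (-(t * |y - a| + (1 - t) * |y - b|) / σ)

section laplaceGeomMix

variable {a b σ t : ℝ}

lemma laplace_rpow_mul_laplace_rpow (hσ : 0 < σ) (y : ℝ) :
    (1 / (2 * σ) * exp (-|y - a| / σ)) ^ t * (1 / (2 * σ) * exp (-|y - b| / σ)) ^ (1 - t)
      = 1 / (2 * σ) * laplaceGeomMix a b σ t y := by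
  rw [mul_exp_rpow_mul_mul_exp_rpow (by positivity), laplaceGeomMix]
  ring_nf

lemma integrable_laplaceGeomMix (hσ : 0 < σ) (ht0 : 0 ≤ t) (ht1 : t ≤ 1) :
    Integrable (laplaceGeomMix a b σ t) := by
  refine (((integrable_exp_neg_abs_div hσ).comp_sub_right a).const_mul (exp (|a - b| / σ))).mono'
    (by unfold laplaceGeomMix; fun_prop) (ae_of_all _ fun y => ?_)
  have htri : |y - a| ≤ |y - b| + |a - b| :=
    (abs_sub_le y b a).trans_eq (by rw [abs_sub_comm b])
  rw [laplaceGeomMix, norm_of_nonneg (exp_pos _).le, ← exp_add, exp_le_exp, ← add_div,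
    div_le_div_iff_of_pos_right hσ]
  nlinarith [mul_le_mul_of_nonneg_left htri (sub_nonneg.2 ht1), abs_nonneg (a - b)]

lemma integral_laplaceGeomMix_one_sub (a b σ t : ℝ) :
    ∫ y, laplaceGeomMix a b σ (1 - t) y = ∫ y, laplaceGeomMix a b σ t y := by
  rw [← integral_sub_left_eq_self _ volume (a + b)]
  congr 1 with y
  rw [laplaceGeomMix, laplaceGeomMix, show a + b - y - a = -(y - b) by ring,
    show a + b - y - b = -(y - a) by ring, abs_neg, abs_neg]
  congr 1
  ring

lemma laplaceGeomMix_half_le (a b σ t y : ℝ) :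
    laplaceGeomMix a b σ (1 / 2) y
      ≤ 1 / 2 * laplaceGeomMix a b σ t y + 1 / 2 * laplaceGeomMix a b σ (1 - t) y := by
  unfold laplaceGeomMix
  rw [show -(1 / 2 * |y - a| + (1 - 1 / 2) * |y - b|) / σ
      = 1 / 2 * (-(t * |y - a| + (1 - t) * |y - b|) / σ)
        + 1 / 2 * (-((1 - t) * |y - a| + (1 - (1 - t)) * |y - b|) / σ) by ring]
  exact convexOn_exp.2 (mem_univ _) (mem_univ _) (by norm_num) (by norm_num) (by norm_num)

lemma integral_laplaceGeomMix_half_le (hσ : 0 < σ) (ht0 : 0 ≤ t) (ht1 : t ≤ 1) :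
    ∫ y, laplaceGeomMix a b σ (1 / 2) y ≤ ∫ y, laplaceGeomMix a b σ t y := by
  have ht := integrable_laplaceGeomMix (a := a) (b := b) hσ ht0 ht1
  have ht' := integrable_laplaceGeomMix (a := a) (b := b) hσ (sub_nonneg.2 ht1) (by linarith)
  calc ∫ y, laplaceGeomMix a b σ (1 / 2) y
      ≤ ∫ y, (1 / 2 * laplaceGeomMix a b σ t y + 1 / 2 * laplaceGeomMix a b σ (1 - t) y) :=
        integral_mono (integrable_laplaceGeomMix hσ (by norm_num) (by norm_num))
          ((ht.const_mul _).add (ht'.const_mul _)) (laplaceGeomMix_half_le a b σ t)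
    _ = ∫ y, laplaceGeomMix a b σ t y := by
        rw [integral_add (ht.const_mul _) (ht'.const_mul _), integral_const_mul,
          integral_const_mul, integral_laplaceGeomMix_one_sub]
        ring

lemma one_div_mul_integral_laplaceGeomMix_half (hσ : 0 < σ) :
    1 / (2 * σ) * ∫ y, laplaceGeomMix a b σ (1 / 2) y
      = (1 + |a - b| / (2 * σ)) * exp (-(|a - b| / (2 * σ))) := by
  have hmix : laplaceGeomMix a b σ (1 / 2) = fun y => exp (-(|y - a| + |y - b|) / (2 * σ)) := by
    ext y
    rw [laplaceGeomMix]
    congr 1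
    field_simp
    ring
  rw [hmix, integral_exp_neg_abs_sub_add_abs_sub (by positivity), neg_div]
  field_simp
  ring

lemma one_div_mul_integral_laplaceGeomMix_half_pos (hσ : 0 < σ) :
    0 < 1 / (2 * σ) * ∫ y, laplaceGeomMix a b σ (1 / 2) y := by
  rw [one_div_mul_integral_laplaceGeomMix_half hσ]
  positivity

lemma neg_log_one_div_mul_integral_laplaceGeomMix_half (hσ : 0 < σ) :
    -log (1 / (2 * σ) * ∫ y, laplaceGeomMix a b σ (1 / 2) y)
      = 1 / 2 * (|a - b| / σ - 2 * log (1 + |a - b| / (2 * σ))) := by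
  rw [one_div_mul_integral_laplaceGeomMix_half hσ, log_mul (by positivity) (exp_pos _).ne',
    log_exp]
  ring

lemma integral_prod_laplace_rpow_mul_prod_laplace_rpow {ι : Type*} [Fintype ι]
    {μa μb σ : ι → ℝ} (hσ : ∀ i, 0 < σ i) (t : ℝ) :
    ∫ x : ι → ℝ, (∏ i, 1 / (2 * σ i) * exp (-|x i - μa i| / σ i)) ^ t
        * (∏ i, 1 / (2 * σ i) * exp (-|x i - μb i| / σ i)) ^ (1 - t)
      = ∏ i, 1 / (2 * σ i) * ∫ y, laplaceGeomMix (μa i) (μb i) (σ i) t y := by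
  rw [integral_prod_rpow_mul_prod_rpow (fun i y => 1 / (2 * σ i) * exp (-|y - μa i| / σ i))
    (fun i y => 1 / (2 * σ i) * exp (-|y - μb i| / σ i))
    (fun i y => by have := hσ i; positivity) (fun i y => by have := hσ i; positivity)]
  refine Finset.prod_congr rfl fun i _ => ?_
  simp only [laplace_rpow_mul_laplace_rpow (hσ i), integral_const_mul]

end laplaceGeomMix

/-- Closed form of the Chernoff information between two product Laplace densities with
common scales, with the supremum over t ∈ (0,1) attained at t = 1/2. -/
theorem stmt8 {d : ℕ} (μa μb : Fin d → ℝ) (σ : Fin d → ℝ) (hσ : ∀ ℓ, 0 < σ ℓ)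
    (fa fb : (Fin d → ℝ) → ℝ)
    (hfa : ∀ x, fa x = ∏ ℓ, 1 / (2 * σ ℓ) * Real.exp (-|x ℓ - μa ℓ| / σ ℓ))
    (hfb : ∀ x, fb x = ∏ ℓ, 1 / (2 * σ ℓ) * Real.exp (-|x ℓ - μb ℓ| / σ ℓ)) :
    (⨆ t : Set.Ioo (0:ℝ) 1, - Real.log (∫ x, fa x ^ (t:ℝ) * fb x ^ (1 - (t:ℝ))))
      = 1 / 2 * ∑ ℓ, (|μa ℓ - μb ℓ| / σ ℓ - 2 * Real.log (1 + |μa ℓ - μb ℓ| / (2 * σ ℓ)))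
    ∧ - Real.log (∫ x, fa x ^ ((1:ℝ)/2) * fb x ^ ((1:ℝ)/2))
      = 1 / 2 * ∑ ℓ, (|μa ℓ - μb ℓ| / σ ℓ - 2 * Real.log (1 + |μa ℓ - μb ℓ| / (2 * σ ℓ))) := by
  have hfactor (t : ℝ) : ∫ x, fa x ^ t * fb x ^ (1 - t)
      = ∏ ℓ, 1 / (2 * σ ℓ) * ∫ y, laplaceGeomMix (μa ℓ) (μb ℓ) (σ ℓ) t y := by
    simp only [hfa, hfb]
    exact integral_prod_laplace_rpow_mul_prod_laplace_rpow hσ t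
  have hpos (ℓ : Fin d) :=
    one_div_mul_integral_laplaceGeomMix_half_pos (a := μa ℓ) (b := μb ℓ) (hσ ℓ)
  have hhalf : -log (∫ x, fa x ^ ((1 : ℝ) / 2) * fb x ^ (1 - (1 : ℝ) / 2))
      = 1 / 2 * ∑ ℓ, (|μa ℓ - μb ℓ| / σ ℓ - 2 * log (1 + |μa ℓ - μb ℓ| / (2 * σ ℓ))) := by
    rw [hfactor, log_prod fun ℓ _ => (hpos ℓ).ne', ← Finset.sum_neg_distrib, Finset.mul_sum]
    exact Finset.sum_congr rfl fun ℓ _ =>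
      neg_log_one_div_mul_integral_laplaceGeomMix_half (hσ ℓ)
  have hmax :
      IsMaxOn (fun t : ℝ => -log (∫ x, fa x ^ t * fb x ^ (1 - t))) (Ioo 0 1) (1 / 2) := by
    intro t ht
    simp only [mem_ofPred_eq, hfactor, neg_le_neg_iff]
    refine log_le_log (Finset.prod_pos fun ℓ _ => hpos ℓ)
      (Finset.prod_le_prod (fun ℓ _ => (hpos ℓ).le) fun ℓ _ => ?_)
    have := hσ ℓ
    exact mul_le_mul_of_nonneg_left (integral_laplaceGeomMix_half_le (hσ ℓ) ht.1.le ht.2.le)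
      (by positivity)
  refine ⟨(hmax.iSup_eq (by norm_num)).trans hhalf, ?_⟩
  rwa [show (1 : ℝ) - 1 / 2 = 1 / 2 by norm_num] at hhalf
end

section
/- Fix δ > 0, labels z* ∈ [k]^n, log-likelihood functions ℓ_a and estimated log-likelihoods ℓ̂_a for a ∈ [k], and let ẑᵢ = argmax_{a∈[k]} ℓ̂_a(Xᵢ). Then the number of misclassified points satisfies ∑ᵢ 1{ẑᵢ ≠ z*ᵢ} ≤ ∑ᵢ ∑_{b≠z*ᵢ} 1{ℓ_{z*ᵢ}(Xᵢ) − ℓ_b(Xᵢ) < δ} + (2/δ) ∑ᵢ ∑_{b≠z*ᵢ} 1{ẑᵢ = b} · max_{a∈[k]} |ℓ̂_a(Xᵢ) − ℓ_a(Xᵢ)|. -/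
/-!
If `ẑ ≠ z*` then `ℓ̂_{ẑ} ≥ ℓ̂_{z*}`, so the true gap `ℓ_{z*} − ℓ_{ẑ}` is at most twice the
estimation error `max_a |ℓ̂_a − ℓ_a|`. Hence either the gap is below `δ` (an ideal error at
`b = ẑ`), or `δ ≤ 2 max_a |ℓ̂_a − ℓ_a|`, i.e. `1 ≤ (2/δ) max_a |ℓ̂_a − ℓ_a|` (an excess error).
-/

open Finset

section Pointwise

variable {ι : Type*} (ℓ ℓhat : ι → ℝ)

lemma abs_sub_le_iSup_abs_sub [Finite ι] (a : ι) : |ℓhat a - ℓ a| ≤ ⨆ c, |ℓhat c - ℓ c| :=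
  le_ciSup (f := fun c => |ℓhat c - ℓ c|) (Set.finite_range _).bddAbove a

lemma sub_le_two_mul_iSup_abs_sub_of_le [Finite ι] {z b : ι} (hb : ℓhat z ≤ ℓhat b) :
    ℓ z - ℓ b ≤ 2 * ⨆ c, |ℓhat c - ℓ c| := by
  have hz := abs_sub_le_iSup_abs_sub ℓ ℓhat z
  have hb' := abs_sub_le_iSup_abs_sub ℓ ℓhat b
  have := neg_abs_le (ℓhat z - ℓ z)
  have := le_abs_self (ℓhat b - ℓ b)
  linarith

variable [Fintype ι] [DecidableEq ι]

lemma sum_ne_boole_mul_eq (z zhat : ι) (M : ℝ) :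
    ∑ b ∈ univ.filter (· ≠ z), (if zhat = b then (1 : ℝ) else 0) * M
      = if zhat ≠ z then M else 0 := by
  simp only [boole_mul, sum_ite_eq, mem_filter, mem_univ, true_and]

lemma boole_ne_le_ideal_add_excess {δ : ℝ} (hδ : 0 < δ) (z zhat : ι)
    (hargmax : ∀ a, ℓhat a ≤ ℓhat zhat) :
    (if zhat ≠ z then (1 : ℝ) else 0)
      ≤ (∑ b ∈ univ.filter (· ≠ z), if ℓ z - ℓ b < δ then (1 : ℝ) else 0)
        + 2 / δ * ∑ b ∈ univ.filter (· ≠ z),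
            (if zhat = b then (1 : ℝ) else 0) * ⨆ c, |ℓhat c - ℓ c| := by
  set M := ⨆ c, |ℓhat c - ℓ c|
  have hM : 0 ≤ M := Real.iSup_nonneg fun c => abs_nonneg _
  have hideal : 0 ≤ ∑ b ∈ univ.filter (· ≠ z), if ℓ z - ℓ b < δ then (1 : ℝ) else 0 :=
    sum_nonneg fun b _ => by positivity
  rw [sum_ne_boole_mul_eq]
  by_cases hz : zhat = z
  · simp only [hz, ne_eq, not_true_eq_false, if_false, mul_zero, add_zero]
    exact hideal
  simp only [hz, ne_eq, not_false_eq_true, if_true]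
  by_cases hgap : ℓ z - ℓ zhat < δ
  · have hone : (1 : ℝ) ≤ ∑ b ∈ univ.filter (· ≠ z), if ℓ z - ℓ b < δ then (1 : ℝ) else 0 := by
      refine le_of_eq_of_le ?_ (single_le_sum (f := fun b => if ℓ z - ℓ b < δ then (1 : ℝ) else 0)
        (fun b _ => by positivity) (mem_filter.2 ⟨mem_univ zhat, hz⟩))
      simp only [hgap, if_true]
    have : 0 ≤ 2 / δ * M := by positivity
    linarith
  · have h2M : δ ≤ 2 * M :=
      (not_lt.1 hgap).trans (sub_le_two_mul_iSup_abs_sub_of_le ℓ ℓhat (hargmax z))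
    have hone : 1 ≤ 2 / δ * M := by
      rw [div_mul_eq_mul_div, le_div_iff₀ hδ]
      linarith
    linarith

end Pointwise

theorem stmt16_general {𝒳 : Type*} {n k : ℕ} (X : Fin n → 𝒳)
    (ℓ ℓhat : Fin k → 𝒳 → ℝ) (zstar zhat : Fin n → Fin k) (δ : ℝ) (hδ : 0 < δ)
    (hargmax : ∀ i a, ℓhat a (X i) ≤ ℓhat (zhat i) (X i)) :
    ((Finset.univ.filter fun i => zhat i ≠ zstar i).card : ℝ)
      ≤ (∑ i, ∑ b ∈ Finset.univ.filter (· ≠ zstar i),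
          if ℓ (zstar i) (X i) - ℓ b (X i) < δ then (1:ℝ) else 0)
        + 2 / δ * ∑ i, ∑ b ∈ Finset.univ.filter (· ≠ zstar i),
            (if zhat i = b then (1:ℝ) else 0)
              * ⨆ a : Fin k, |ℓhat a (X i) - ℓ a (X i)| := by
  rw [card_filter, Nat.cast_sum, mul_sum, ← sum_add_distrib]
  refine sum_le_sum fun i _ => ?_
  push_cast
  exact boole_ne_le_ideal_add_excess (fun a => ℓ a (X i)) (fun a => ℓhat a (X i)) hδ
    (zstar i) (zhat i) (hargmax i)

/-- Decomposition of the misclustering error into ideal error plus excess error. -/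
theorem stmt16 {𝒳 : Type*} {n k : ℕ} [NeZero k] (X : Fin n → 𝒳)
    (ℓ ℓhat : Fin k → 𝒳 → ℝ) (zstar zhat : Fin n → Fin k) (δ : ℝ) (hδ : 0 < δ)
    (hargmax : ∀ i a, ℓhat a (X i) ≤ ℓhat (zhat i) (X i)) :
    ((Finset.univ.filter fun i => zhat i ≠ zstar i).card : ℝ)
      ≤ (∑ i, ∑ b ∈ Finset.univ.filter (· ≠ zstar i),
          if ℓ (zstar i) (X i) - ℓ b (X i) < δ then (1:ℝ) else 0)
        + 2 / δ * ∑ i, ∑ b ∈ Finset.univ.filter (· ≠ zstar i),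
            (if zhat i = b then (1:ℝ) else 0)
              * ⨆ a : Fin k, |ℓhat a (X i) - ℓ a (X i)| :=
  stmt16_general X ℓ ℓhat zstar zhat δ hδ hargmax
end

section
/- Let p_{ψ,θ}(y) = h(y) exp(⟨u(y),θ⟩ − ψ(θ)) be a regular exponential family with minimal sufficient statistic u and strictly convex, differentiable log-partition function ψ on the open set Θ. Let ψ* be the Legendre transform of ψ and μ(θ) = ∇ψ(θ). Then for all θ ∈ Θ and all y, p_{ψ,θ}(y) = b_ψ(y) exp(−Breg_{ψ*}(u(y), μ(θ))), where b_ψ(y) = h(y) exp(ψ*(u(y))). -/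
/-!
The density is `h y * exp (⟪u y, θ⟫ - ψ θ)`, so the claim is the identity
`ψ* μ + ψ θ = ⟪θ, μ⟫` together with `∇ψ* μ = θ` at `μ = ∇ψ θ`. The first is the Fenchel–Young
equality: by the gradient inequality, the supremum defining `ψ* μ` is attained at `θ`. Hence
`z ↦ ψ* z - ⟪θ, z⟫` is minimised at `μ` over the (convex) set where that supremum is finite, so
`⟪∇ψ* μ - θ, z - μ⟫ ≥ 0` for all `z` in it. Since `Θ` is open, `z = ∇ψ θ'` with
`θ' = θ + t (θ - ∇ψ* μ)`, `t > 0` small, is such a point, and strict monotonicity of `∇ψ` then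
forces `∇ψ* μ = θ`.
-/

open Set Filter Topology
open scoped RealInnerProductSpace

theorem IsOpen.exists_pos_add_smul_mem {F : Type*} [AddCommGroup F] [TopologicalSpace F]
    [Module ℝ F] [ContinuousAdd F] [ContinuousSMul ℝ F] {s : Set F} (hs : IsOpen s) {a : F}
    (ha : a ∈ s) (v : F) : ∃ t : ℝ, 0 < t ∧ a + t • v ∈ s := by
  have hline : Tendsto (fun t : ℝ => a + t • v) (𝓝[>] 0) (𝓝 a) := by
    have hcont : Continuous fun t : ℝ => a + t • v := by fun_prop
    simpa using (hcont.tendsto 0).mono_left nhdsWithin_le_nhds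
  exact ((hline.eventually (hs.mem_nhds ha)).and self_mem_nhdsWithin).exists.imp
    fun t ht => ⟨ht.2, ht.1⟩

section

variable {E : Type*} [NormedAddCommGroup E] [InnerProductSpace ℝ E]
  {s : Set E} {f : E → ℝ} {a b g : E}

/-- The effective domain of the convex conjugate `x ↦ ⨆ θ : s, ⟪θ, x⟫ - f θ`; outside it the
supremum is the junk value `0`. -/
def conjugateDomain (s : Set E) (f : E → ℝ) : Set E :=
  {x | BddAbove (range fun θ : s => ⟪(θ : E), x⟫ - f θ)}

theorem convex_conjugateDomain : Convex ℝ (conjugateDomain s f) := by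
  rintro x ⟨M, hM⟩ y ⟨N, hN⟩ c d hc hd hcd
  refine ⟨c * M + d * N, forall_mem_range.2 fun θ => ?_⟩
  have hx : ⟪(θ : E), x⟫ - f θ ≤ M := hM (mem_range_self θ)
  have hy : ⟪(θ : E), y⟫ - f θ ≤ N := hN (mem_range_self θ)
  have hcomb : ⟪(θ : E), c • x + d • y⟫ - f θ
      = c * (⟪(θ : E), x⟫ - f θ) + d * (⟪(θ : E), y⟫ - f θ) := by
    rw [inner_add_right, real_inner_smul_right, real_inner_smul_right]
    linear_combination f θ * hcd
  rw [hcomb]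
  gcongr

variable [CompleteSpace E]

theorem IsMinOn.inner_gradient_sub_nonneg {D : Set E} {φ : E → ℝ} {x z w : E}
    (hmin : IsMinOn φ D x) (hD : Convex ℝ D) (hx : x ∈ D) (hz : z ∈ D)
    (hφ : HasGradientAt φ w x) : 0 ≤ ⟪w, z - x⟫ := by
  simpa using hmin.localize.hasFDerivWithinAt_nonneg hφ.hasFDerivAt.hasFDerivWithinAt
    (sub_mem_posTangentConeAt_of_segment_subset (hD.segment_subset hx hz))

theorem HasGradientAt.sub_inner (hg : HasGradientAt f g b) (a : E) :
    HasGradientAt (fun z => f z - ⟪a, z⟫) (g - a) b := by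
  rw [hasGradientAt_iff_hasFDerivAt, map_sub]
  exact hg.hasFDerivAt.sub (InnerProductSpace.toDual ℝ E a).hasFDerivAt

theorem ConvexOn.inner_gradient_le_sub (hf : ConvexOn ℝ s f) (ha : a ∈ s) (hb : b ∈ s)
    (hg : HasGradientAt f g a) : ⟪g, b - a⟫ ≤ f b - f a := by
  let ℓ : ℝ →ᵃ[ℝ] E := AffineMap.lineMap a b
  have hℓ : HasDerivAt (f ∘ ℓ) ⟪g, b - a⟫ 0 := by
    have hfa : HasFDerivAt f (InnerProductSpace.toDual ℝ E g) (ℓ 0) := by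
      simpa [ℓ] using hg.hasFDerivAt
    simpa using hfa.comp_hasDerivAt (0 : ℝ) AffineMap.hasDerivAt_lineMap
  have hslope := (hf.comp_affineMap ℓ).le_slope_of_hasDerivAt
    (by simpa [ℓ] using ha) (by simpa [ℓ] using hb) zero_lt_one hℓ
  simpa [ℓ, slope_def_field] using hslope

theorem StrictConvexOn.inner_gradient_lt_sub (hf : StrictConvexOn ℝ s f) (ha : a ∈ s)
    (hb : b ∈ s) (hab : a ≠ b) (hg : HasGradientAt f g a) : ⟪g, b - a⟫ < f b - f a := by
  set m : E := (1 / 2 : ℝ) • a + (1 / 2 : ℝ) • b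
  have hm : m ∈ s := hf.1 ha hb (by norm_num) (by norm_num) (by norm_num)
  have hle := hf.convexOn.inner_gradient_le_sub ha hm hg
  have hlt : f m < (1 / 2 : ℝ) * f a + (1 / 2 : ℝ) * f b :=
    hf.2 ha hb hab (by norm_num) (by norm_num) (by norm_num)
  have hma : m - a = (1 / 2 : ℝ) • (b - a) := by module
  rw [hma, real_inner_smul_right] at hle
  linarith

theorem StrictConvexOn.inner_sub_gradient_pos (hf : StrictConvexOn ℝ s f) (ha : a ∈ s)
    (hb : b ∈ s) (hab : a ≠ b) {ga gb : E} (hga : HasGradientAt f ga a)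
    (hgb : HasGradientAt f gb b) : 0 < ⟪ga - gb, a - b⟫ := by
  have h₁ := hf.inner_gradient_lt_sub ha hb hab hga
  have h₂ := hf.inner_gradient_lt_sub hb ha hab.symm hgb
  rw [← neg_sub a b, inner_neg_right] at h₁
  rw [inner_sub_left]
  linarith

theorem ConvexOn.inner_sub_le_of_hasGradientAt (hf : ConvexOn ℝ s f) (ha : a ∈ s)
    (hg : HasGradientAt f g a) {θ : E} (hθ : θ ∈ s) : ⟪θ, g⟫ - f θ ≤ ⟪a, g⟫ - f a := by
  have := hf.inner_gradient_le_sub ha hθ hg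
  rw [inner_sub_right] at this
  rw [real_inner_comm g θ, real_inner_comm g a]
  linarith

theorem ConvexOn.gradient_mem_conjugateDomain (hf : ConvexOn ℝ s f) (ha : a ∈ s)
    (hg : HasGradientAt f g a) : g ∈ conjugateDomain s f :=
  ⟨_, forall_mem_range.2 fun θ => hf.inner_sub_le_of_hasGradientAt ha hg θ.2⟩

theorem ConvexOn.iSup_inner_sub_eq_of_hasGradientAt (hf : ConvexOn ℝ s f) (ha : a ∈ s)
    (hg : HasGradientAt f g a) : ⨆ θ : s, (⟪(θ : E), g⟫ - f θ) = ⟪a, g⟫ - f a := by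
  have : Nonempty s := ⟨⟨a, ha⟩⟩
  exact le_antisymm (ciSup_le fun θ => hf.inner_sub_le_of_hasGradientAt ha hg θ.2)
    (le_ciSup (hf.gradient_mem_conjugateDomain ha hg) ⟨a, ha⟩)

theorem StrictConvexOn.eq_of_hasGradientAt_conjugate_gradient (hs : IsOpen s)
    (hf : StrictConvexOn ℝ s f) {f' : E → E} (hf' : ∀ θ ∈ s, HasGradientAt f (f' θ) θ)
    {fstar : E → ℝ} (hfstar : ∀ x, fstar x = ⨆ θ : s, (⟪(θ : E), x⟫ - f θ))
    (ha : a ∈ s) (hg : HasGradientAt fstar g (f' a)) : g = a := by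
  have hmin : IsMinOn (fun z => fstar z - ⟪a, z⟫) (conjugateDomain s f) (f' a) := by
    intro z hz
    have := le_ciSup hz ⟨a, ha⟩
    simp only [mem_ofPred_eq, hfstar,
      hf.convexOn.iSup_inner_sub_eq_of_hasGradientAt ha (hf' a ha)]
    linarith
  by_contra hga
  obtain ⟨t, ht, hθ⟩ := hs.exists_pos_add_smul_mem ha (a - g)
  have hθne : a ≠ a + t • (a - g) := by
    simpa [eq_comm, sub_eq_zero, ht.ne'] using Ne.symm hga
  have hmono := hf.inner_sub_gradient_pos ha hθ hθne (hf' a ha) (hf' _ hθ)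
  have hnonneg := hmin.inner_gradient_sub_nonneg convex_conjugateDomain
    (hf.convexOn.gradient_mem_conjugateDomain ha (hf' a ha))
    (hf.convexOn.gradient_mem_conjugateDomain hθ (hf' _ hθ)) (hg.sub_inner a)
  have hdir : a - (a + t • (a - g)) = t • (g - a) := by module
  rw [hdir, real_inner_smul_right, ← neg_sub, inner_neg_left, real_inner_comm] at hmono
  nlinarith

end

theorem stmt18_general {p : ℕ} {𝒴 : Type*}
    (Θ : Set (EuclideanSpace ℝ (Fin p))) (hΘ : IsOpen Θ)
    (ψ : EuclideanSpace ℝ (Fin p) → ℝ)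
    (hconv : StrictConvexOn ℝ Θ ψ)
    (ψ' : EuclideanSpace ℝ (Fin p) → EuclideanSpace ℝ (Fin p))
    (hψ' : ∀ θ ∈ Θ, HasGradientAt ψ (ψ' θ) θ)
    (h : 𝒴 → ℝ) (u : 𝒴 → EuclideanSpace ℝ (Fin p))
    (ψstar : EuclideanSpace ℝ (Fin p) → ℝ)
    (hψstar : ∀ x, ψstar x
      = ⨆ θ : Θ, ((inner ℝ (θ : EuclideanSpace ℝ (Fin p)) x : ℝ) - ψ θ))
    (ψstar' : EuclideanSpace ℝ (Fin p) → EuclideanSpace ℝ (Fin p))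
    (hψstar' : ∀ x, HasGradientAt ψstar (ψstar' x) x) :
    ∀ θ ∈ Θ, ∀ y : 𝒴,
      h y * Real.exp ((inner ℝ (u y) θ : ℝ) - ψ θ)
        = (h y * Real.exp (ψstar (u y)))
          * Real.exp (-(ψstar (u y) - ψstar (ψ' θ)
              - (inner ℝ (u y - ψ' θ) (ψstar' (ψ' θ)) : ℝ))) := by
  intro θ hθ y
  have hvalue : ψstar (ψ' θ) = ⟪θ, ψ' θ⟫ - ψ θ := by
    rw [hψstar]
    exact hconv.convexOn.iSup_inner_sub_eq_of_hasGradientAt hθ (hψ' θ hθ)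
  have hgrad : ψstar' (ψ' θ) = θ :=
    hconv.eq_of_hasGradientAt_conjugate_gradient hΘ hψ' hψstar hθ (hψstar' _)
  rw [hgrad, hvalue, mul_assoc, ← Real.exp_add, inner_sub_left, real_inner_comm θ (ψ' θ)]
  ring_nf

/-- Exponential family densities rewrite as a Bregman divergence to the mean parameter:
p_{ψ,θ}(y) = b_ψ(y) exp(−Breg_{ψ*}(u(y), μ(θ))) with b_ψ(y) = h(y) exp(ψ*(u(y))) and
μ(θ) = ∇ψ(θ). -/
theorem stmt18 {p : ℕ} {𝒴 : Type*}
    (Θ : Set (EuclideanSpace ℝ (Fin p))) (hΘ : IsOpen Θ) (hΘne : Θ.Nonempty)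
    (ψ : EuclideanSpace ℝ (Fin p) → ℝ)
    (hconv : StrictConvexOn ℝ Θ ψ)
    (ψ' : EuclideanSpace ℝ (Fin p) → EuclideanSpace ℝ (Fin p))
    (hψ' : ∀ θ ∈ Θ, HasGradientAt ψ (ψ' θ) θ)
    (h : 𝒴 → ℝ) (u : 𝒴 → EuclideanSpace ℝ (Fin p))
    (ψstar : EuclideanSpace ℝ (Fin p) → ℝ)
    (hψstar : ∀ x, ψstar x
      = ⨆ θ : Θ, ((inner ℝ (θ : EuclideanSpace ℝ (Fin p)) x : ℝ) - ψ θ))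
    (ψstar' : EuclideanSpace ℝ (Fin p) → EuclideanSpace ℝ (Fin p))
    (hψstar' : ∀ x, HasGradientAt ψstar (ψstar' x) x) :
    ∀ θ ∈ Θ, ∀ y : 𝒴,
      h y * Real.exp ((inner ℝ (u y) θ : ℝ) - ψ θ)
        = (h y * Real.exp (ψstar (u y)))
          * Real.exp (-(ψstar (u y) - ψstar (ψ' θ)
              - (inner ℝ (u y - ψ' θ) (ψstar' (ψ' θ)) : ℝ))) :=
  stmt18_general Θ hΘ ψ hconv ψ' hψ' h u ψstar hψstar ψstar' hψstar'
end
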